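/- Let P_{XY} = P₁ × P₂ and Q_{XY} = Q₁ × Q₂ be products of BSDSs with parameters p₁, p₂ and q₁ = p₂, q₂ = p₁ (so p₁ = q₂, p₂ = q₁), with all parameters in (0,1/2] and p₁ ≠ p₂. Then the conditional entropies satisfy H_P(X|Y) = H_Q(X|Y) = h(p₁) + h(p₂), and the minimum of D(P̃ ‖ Q_{XY}) over joint distributions P̃ on {0,1}² × {0,1}² with P̃_X = P_X, P̃_Y = P_Y, and H(X̃|Ỹ) ≥ H_P(X|Y) equals 0, attained at P̃ = Q_{XY}. -/

import Mathlib

open Real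

/-- Binary symmetric double source with crossover probability `r`. -/
noncomputable def bsds (r : ℝ) : Fin 2 → Fin 2 → ℝ :=
  fun x y => if x = y then (1 - r) / 2 else r / 2

/-- Product of two BSDSs. -/
noncomputable def prodSrc (r₁ r₂ : ℝ) : Fin 2 × Fin 2 → Fin 2 × Fin 2 → ℝ :=
  fun x y => bsds r₁ x.1 y.1 * bsds r₂ x.2 y.2

/-- Binary entropy. -/
noncomputable def hbin (p : ℝ) : ℝ := -(p * Real.log p + (1 - p) * Real.log (1 - p))

/-- KL divergence on a finite product alphabet. -/
noncomputable def kl2 {X Y : Type*} [Fintype X] [Fintype Y] (P Q : X → Y → ℝ) : ℝ :=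
  ∑ x, ∑ y, P x y * Real.log (P x y / Q x y)

/-- Conditional entropy `H(X̃|Ỹ)` of a joint distribution. -/
noncomputable def condEnt {X Y : Type*} [Fintype X] [Fintype Y] (P : X → Y → ℝ) : ℝ :=
  ∑ x, ∑ y, P x y * Real.log ((∑ x', P x' y) / P x y)

/-!
Conditional entropy is additive over products of independent positive sources, and a BSDS with
parameter `r` has uniform marginals and `H(X|Y) = h(r)`; so swapping the two parameters does not
change `H(X|Y)`. Since every marginal in sight is uniform, `Q_{XY}` is itself feasible, with
divergence `0`, while Gibbs' inequality `p - q ≤ p log (p / q)` makes every divergence from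
`Q_{XY}` of a distribution of the same total mass nonnegative.
-/

lemma bsds_pos {r : ℝ} (h₀ : 0 < r) (h₁ : r < 1) (x y : Fin 2) : 0 < bsds r x y := by
  unfold bsds; split_ifs <;> linarith

lemma sum_bsds_left (r : ℝ) (y : Fin 2) : ∑ x, bsds r x y = 1 / 2 := by
  fin_cases y <;> simp [bsds, Fin.sum_univ_two] <;> ring

lemma sum_bsds_right (r : ℝ) (x : Fin 2) : ∑ y, bsds r x y = 1 / 2 := by
  fin_cases x <;> simp [bsds, Fin.sum_univ_two] <;> ring

lemma sum_sum_bsds (r : ℝ) : ∑ x, ∑ y, bsds r x y = 1 := by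
  simp only [sum_bsds_right, Finset.sum_const, Finset.card_univ, Fintype.card_fin]
  norm_num

lemma sum_prodSrc_left (r₁ r₂ : ℝ) (y : Fin 2 × Fin 2) : ∑ x, prodSrc r₁ r₂ x y = 1 / 4 := by
  simp only [prodSrc, Fintype.sum_prod_type, ← Finset.sum_mul_sum, sum_bsds_left]
  norm_num

lemma sum_prodSrc_right (r₁ r₂ : ℝ) (x : Fin 2 × Fin 2) : ∑ y, prodSrc r₁ r₂ x y = 1 / 4 := by
  simp only [prodSrc, Fintype.sum_prod_type, ← Finset.sum_mul_sum, sum_bsds_right]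
  norm_num

lemma condEnt_bsds (r : ℝ) : condEnt (bsds r) = hbin r := by
  simp only [condEnt, sum_bsds_left]
  simp only [hbin, bsds, Fin.sum_univ_two, ↓reduceIte, one_div, Fin.isValue, zero_ne_one,
    one_ne_zero]
  rw [show (2⁻¹ : ℝ) / ((1 - r) / 2) = (1 - r)⁻¹ by field_simp,
    show (2⁻¹ : ℝ) / (r / 2) = r⁻¹ by field_simp, Real.log_inv, Real.log_inv]
  ring

theorem condEnt_mul {X₁ Y₁ X₂ Y₂ : Type*} [Fintype X₁] [Fintype Y₁] [Fintype X₂] [Fintype Y₂]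
    (A : X₁ → Y₁ → ℝ) (B : X₂ → Y₂ → ℝ) (hA : ∀ x y, 0 < A x y) (hB : ∀ x y, 0 < B x y)
    (hA₁ : ∑ x, ∑ y, A x y = 1) (hB₁ : ∑ x, ∑ y, B x y = 1) :
    condEnt (fun (x : X₁ × X₂) (y : Y₁ × Y₂) => A x.1 y.1 * B x.2 y.2) = condEnt A + condEnt B := by
  have hcol : ∀ y : Y₁ × Y₂, ∑ x : X₁ × X₂, A x.1 y.1 * B x.2 y.2
      = (∑ x, A x y.1) * ∑ x, B x y.2 := fun y => by
    rw [Fintype.sum_prod_type, Finset.sum_mul_sum]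
  have hlog : ∀ (x : X₁ × X₂) (y : Y₁ × Y₂),
      Real.log ((∑ x', A x' y.1) * (∑ x', B x' y.2) / (A x.1 y.1 * B x.2 y.2))
        = Real.log ((∑ x', A x' y.1) / A x.1 y.1) + Real.log ((∑ x', B x' y.2) / B x.2 y.2) := by
    intro x y
    have hcA : 0 < ∑ x', A x' y.1 := Finset.sum_pos (fun _ _ => hA _ _) ⟨x.1, Finset.mem_univ _⟩
    have hcB : 0 < ∑ x', B x' y.2 := Finset.sum_pos (fun _ _ => hB _ _) ⟨x.2, Finset.mem_univ _⟩
    rw [mul_div_mul_comm, Real.log_mul (div_pos hcA (hA _ _)).ne' (div_pos hcB (hB _ _)).ne']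
  simp only [condEnt, hcol, hlog, mul_add, Finset.sum_add_distrib, Fintype.sum_prod_type]
  congr 1
  · calc _ = ∑ x, ∑ y, A x y * Real.log ((∑ x', A x' y) / A x y) * ∑ x', ∑ y', B x' y' := by
          simp only [Finset.mul_sum]
          refine Finset.sum_congr rfl fun x _ => Finset.sum_comm.trans ?_
          exact Finset.sum_congr rfl fun _ _ => Finset.sum_congr rfl fun _ _ =>
            Finset.sum_congr rfl fun _ _ => by ring
      _ = _ := by rw [hB₁]; simp only [mul_one]
  · calc _ = (∑ x, ∑ y, A x y) * ∑ x, ∑ y, B x y * Real.log ((∑ x', B x' y) / B x y) := by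
          simp only [Finset.sum_mul]
          simp only [Finset.mul_sum]
          refine Finset.sum_congr rfl fun x _ => Finset.sum_comm.trans ?_
          exact Finset.sum_congr rfl fun _ _ => Finset.sum_congr rfl fun _ _ =>
            Finset.sum_congr rfl fun _ _ => by ring
      _ = _ := by rw [hA₁, one_mul]

lemma condEnt_prodSrc {r₁ r₂ : ℝ} (h₁₀ : 0 < r₁) (h₁₁ : r₁ < 1) (h₂₀ : 0 < r₂) (h₂₁ : r₂ < 1) :
    condEnt (prodSrc r₁ r₂) = hbin r₁ + hbin r₂ := by
  unfold prodSrc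
  rw [condEnt_mul _ _ (bsds_pos h₁₀ h₁₁) (bsds_pos h₂₀ h₂₁) (sum_sum_bsds r₁)
    (sum_sum_bsds r₂), condEnt_bsds r₁, condEnt_bsds r₂]

lemma sub_le_mul_log_div {p q : ℝ} (hp : 0 ≤ p) (hq : 0 < q) : p - q ≤ p * Real.log (p / q) := by
  have h := Real.self_sub_one_le_mul_log (div_nonneg hp hq.le)
  calc p - q = q * (p / q - 1) := by field_simp
    _ ≤ q * (p / q * Real.log (p / q)) := mul_le_mul_of_nonneg_left h hq.le
    _ = p * Real.log (p / q) := by field_simp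

theorem kl2_nonneg {X Y : Type*} [Fintype X] [Fintype Y] {P Q : X → Y → ℝ}
    (hP : ∀ x y, 0 ≤ P x y) (hQ : ∀ x y, 0 < Q x y)
    (hPQ : ∑ x, ∑ y, P x y = ∑ x, ∑ y, Q x y) : 0 ≤ kl2 P Q :=
  calc (0 : ℝ) = ∑ x, ∑ y, (P x y - Q x y) := by
        simp only [Finset.sum_sub_distrib, hPQ, sub_self]
    _ ≤ kl2 P Q := Finset.sum_le_sum fun x _ => Finset.sum_le_sum fun y _ =>
        sub_le_mul_log_div (hP x y) (hQ x y)

lemma kl2_self {X Y : Type*} [Fintype X] [Fintype Y] (P : X → Y → ℝ) : kl2 P P = 0 := by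
  simp [kl2]

theorem stmt9_general (p₁ p₂ q₁ q₂ : ℝ)
    (hp₁ : 0 < p₁ ∧ p₁ ≤ 1 / 2) (hp₂ : 0 < p₂ ∧ p₂ ≤ 1 / 2)
    (h12 : q₂ = p₁) (h21 : q₁ = p₂) :
    condEnt (prodSrc p₁ p₂) = hbin p₁ + hbin p₂ ∧
    condEnt (prodSrc q₁ q₂) = hbin p₁ + hbin p₂ ∧
    IsLeast {d : ℝ | ∃ Pt : Fin 2 × Fin 2 → Fin 2 × Fin 2 → ℝ,
        (∀ x y, 0 ≤ Pt x y) ∧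
        (∀ x, ∑ y, Pt x y = ∑ y, prodSrc p₁ p₂ x y) ∧
        (∀ y, ∑ x, Pt x y = ∑ x, prodSrc p₁ p₂ x y) ∧
        condEnt Pt ≥ condEnt (prodSrc p₁ p₂) ∧
        d = kl2 Pt (prodSrc q₁ q₂)}
      0 ∧
    kl2 (prodSrc q₁ q₂) (prodSrc q₁ q₂) = 0 := by
  subst q₁ q₂
  obtain ⟨hp₁0, hp₁h⟩ := hp₁
  obtain ⟨hp₂0, hp₂h⟩ := hp₂
  have hp₁1 : p₁ < 1 := by linarith
  have hp₂1 : p₂ < 1 := by linarith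
  have hP := condEnt_prodSrc hp₁0 hp₁1 hp₂0 hp₂1
  have hQ : condEnt (prodSrc p₂ p₁) = hbin p₁ + hbin p₂ := by
    rw [condEnt_prodSrc hp₂0 hp₂1 hp₁0 hp₁1, add_comm]
  have hQ_pos : ∀ x y, 0 < prodSrc p₂ p₁ x y := fun x y =>
    mul_pos (bsds_pos hp₂0 hp₂1 _ _) (bsds_pos hp₁0 hp₁1 _ _)
  refine ⟨hP, hQ, ⟨⟨prodSrc p₂ p₁, fun x y => (hQ_pos x y).le,
      fun x => by rw [sum_prodSrc_right, sum_prodSrc_right],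
      fun y => by rw [sum_prodSrc_left, sum_prodSrc_left],
      (hQ.trans hP.symm).ge, (kl2_self _).symm⟩, ?_⟩, kl2_self _⟩
  rintro d ⟨Pt, hPt, hrow, -, -, rfl⟩
  refine kl2_nonneg hPt hQ_pos ?_
  simp only [hrow, sum_prodSrc_right]

/-- For the reversely aligned product of BSDSs, `H_P(X|Y) = H_Q(X|Y) = h(p₁) + h(p₂)`,
and the inner minimization of the binning bound equals `0`, attained at `P̃ = Q_{XY}`. -/
theorem stmt9 (p₁ p₂ q₁ q₂ : ℝ)
    (hp₁ : 0 < p₁ ∧ p₁ ≤ 1 / 2) (hp₂ : 0 < p₂ ∧ p₂ ≤ 1 / 2)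
    (h12 : q₂ = p₁) (h21 : q₁ = p₂) (hne : p₁ ≠ p₂) :
    condEnt (prodSrc p₁ p₂) = hbin p₁ + hbin p₂ ∧
    condEnt (prodSrc q₁ q₂) = hbin p₁ + hbin p₂ ∧
    IsLeast {d : ℝ | ∃ Pt : Fin 2 × Fin 2 → Fin 2 × Fin 2 → ℝ,
        (∀ x y, 0 ≤ Pt x y) ∧
        (∀ x, ∑ y, Pt x y = ∑ y, prodSrc p₁ p₂ x y) ∧
        (∀ y, ∑ x, Pt x y = ∑ x, prodSrc p₁ p₂ x y) ∧
        condEnt Pt ≥ condEnt (prodSrc p₁ p₂) ∧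
        d = kl2 Pt (prodSrc q₁ q₂)}
      0 ∧
    kl2 (prodSrc q₁ q₂) (prodSrc q₁ q₂) = 0 :=
  stmt9_general p₁ p₂ q₁ q₂ hp₁ hp₂ h12 h21
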